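/- Every closed linear λ-term M has a ground type: there exists a ground type A such that ⊢ M : A is derivable in IMLL₂. -/

import Mathlib

/-!
Core development: untyped λ-terms in de Bruijn representation, linearity,
β- and η-reduction, as in the paper "A type-assignment of linear erasure
and duplication" (Curzi, Roversi).
-/

namespace LEMPaper

/-- Untyped λ-terms, de Bruijn representation. -/
inductive Lam : Type
  | var : ℕ → Lam
  | app : Lam → Lam → Lam
  | lam : Lam → Lam
  deriving DecidableEq

namespace Lam

/-- Lift a renaming under a binder. -/
def liftRen (ρ : ℕ → ℕ) : ℕ → ℕ
  | 0 => 0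
  | n + 1 => ρ n + 1

/-- Apply a renaming of free variables. -/
def rename (ρ : ℕ → ℕ) : Lam → Lam
  | var n => var (ρ n)
  | app M N => app (M.rename ρ) (N.rename ρ)
  | lam M => lam (M.rename (liftRen ρ))

/-- Shift all free variables up by one. -/
def shift (M : Lam) : Lam := M.rename Nat.succ

/-- Lift a simultaneous substitution under a binder. -/
def liftSub (s : ℕ → Lam) : ℕ → Lam
  | 0 => var 0
  | n + 1 => (s n).shift

/-- Simultaneous (capture-avoiding) substitution. -/
def substAll (s : ℕ → Lam) : Lam → Lam
  | var n => s n
  | app M N => app (M.substAll s) (N.substAll s)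
  | lam M => lam (M.substAll (liftSub s))

/-- Capture-avoiding substitution `M[N/n]`; the variables above `n` are decremented. -/
def subst (M : Lam) (n : ℕ) (N : Lam) : Lam :=
  M.substAll (fun m => if m < n then var m else if m = n then N else var (m - 1))

/-- Number of (free) occurrences of the variable `n` in a term. -/
def countFree : Lam → ℕ → ℕ
  | var m, n => if m = n then 1 else 0
  | app M N, n => M.countFree n + N.countFree n
  | lam M, n => M.countFree (n + 1)

/-- A term is closed when it has no free variables. -/
def Closed (M : Lam) : Prop := ∀ n, M.countFree n = 0

/-- A λ-term is linear if all of its free variables occur exactly once in it and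
every abstraction binds a variable occurring exactly once in its (linear) body. -/
def Linear : Lam → Prop
  | var _ => True
  | app M N => M.Linear ∧ N.Linear ∧ ∀ n, M.countFree n = 0 ∨ N.countFree n = 0
  | lam M => M.Linear ∧ M.countFree 0 = 1

/-- The identity combinator `I = λx.x`. -/
def I : Lam := lam (var 0)

/-- The linear pairing `⟨M,N⟩ = λz. z M N`. -/
def pair (M N : Lam) : Lam := lam (app (app (var 0) M.shift) N.shift)

/-- The size (number of nodes of the syntax tree) of a term. -/
def size : Lam → ℕ
  | var _ => 1
  | app M N => M.size + N.size + 1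
  | lam M => M.size + 1

/-- One-step β-reduction, closed under arbitrary contexts. -/
inductive Beta : Lam → Lam → Prop
  | beta (M N : Lam) : Beta (app (lam M) N) (M.subst 0 N)
  | appL {M M'} (N : Lam) : Beta M M' → Beta (app M N) (app M' N)
  | appR (M : Lam) {N N'} : Beta N N' → Beta (app M N) (app M N')
  | lam {M M'} : Beta M M' → Beta (lam M) (lam M')

/-- One-step η-reduction `λx.Mx →η M` (x not free in M), closed under contexts. -/
inductive Eta : Lam → Lam → Prop
  | eta (M : Lam) : Eta (lam (app M.shift (var 0))) M
  | appL {M M'} (N : Lam) : Eta M M' → Eta (app M N) (app M' N)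
  | appR (M : Lam) {N N'} : Eta N N' → Eta (app M N) (app M N')
  | lam {M M'} : Eta M M' → Eta (lam M) (lam M')

/-- One-step βη-reduction. -/
def BetaEta (M N : Lam) : Prop := Beta M N ∨ Eta M N

/-- A value is a closed linear λ-term in β-normal form. -/
def IsValue (V : Lam) : Prop := V.Linear ∧ V.Closed ∧ ∀ W, ¬ Beta V W

end Lam

end LEMPaper

namespace LEMPaper

/-- Types of second-order intuitionistic multiplicative linear logic `IMLL₂`:
`A ::= α | A ⊸ B | ∀α.A` (type variables in de Bruijn representation). -/
inductive Ty : Type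
  | var : ℕ → Ty
  | arr : Ty → Ty → Ty
  | all : Ty → Ty
  deriving DecidableEq

namespace Ty

def liftRen (ρ : ℕ → ℕ) : ℕ → ℕ
  | 0 => 0
  | n + 1 => ρ n + 1

def rename (ρ : ℕ → ℕ) : Ty → Ty
  | var n => var (ρ n)
  | arr A B => arr (A.rename ρ) (B.rename ρ)
  | all A => all (A.rename (liftRen ρ))

/-- Shift all free type variables up by one. -/
def shift (A : Ty) : Ty := A.rename Nat.succ

def liftSub (s : ℕ → Ty) : ℕ → Ty
  | 0 => var 0
  | n + 1 => (s n).shift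

def substAll (s : ℕ → Ty) : Ty → Ty
  | var n => s n
  | arr A B => arr (A.substAll s) (B.substAll s)
  | all A => all (A.substAll (liftSub s))

/-- `A.instTop B` instantiates the outermost bound type variable of `A` with `B`
(i.e. `A⟨B/α⟩` where `α` is the variable bound by an enclosing `∀`). -/
def instTop (A B : Ty) : Ty :=
  A.substAll (fun n => match n with | 0 => B | m + 1 => var m)

/-- All free type variables are `< d`. -/
def ClosedAt : Ty → ℕ → Prop
  | var n, d => n < d
  | arr A B, d => A.ClosedAt d ∧ B.ClosedAt d
  | all A, d => A.ClosedAt (d + 1)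

/-- A type is closed when it has no free type variables. -/
def Closed (A : Ty) : Prop := A.ClosedAt 0

/-- `isPiSigma A true` means `A` is a `Π₁`-type, `isPiSigma A false` that `A` is a
`Σ₁`-type, following the mutual grammar
`Π₁ ::= α | Σ₁ ⊸ Π₁ | ∀α.Π₁` and `Σ₁ ::= α | Π₁ ⊸ Σ₁`. -/
def isPiSigma : Ty → Bool → Prop
  | var _, _ => True
  | arr A B, b => A.isPiSigma (!b) ∧ B.isPiSigma b
  | all A, b => b = true ∧ A.isPiSigma true

/-- A ground type is a closed `Π₁`-type. -/
def Ground (A : Ty) : Prop := A.isPiSigma true ∧ A.Closed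

/-- The unity type `1 = ∀α.(α ⊸ α)`. -/
def one : Ty := all (arr (var 0) (var 0))

/-- The tensor product `A ⊗ B = ∀α.(A ⊸ B ⊸ α) ⊸ α`. -/
def tensor (A B : Ty) : Ty :=
  all (arr (arr A.shift (arr B.shift (var 0))) (var 0))

end Ty

/-- Typing contexts for the linear λ-calculus: position `i` records the type of the
de Bruijn variable `i` (`none` meaning that the variable is not available). -/
abbrev Ctx := List (Option Ty)

/-- Splitting of a linear context into two disjoint parts. -/
inductive Split : Ctx → Ctx → Ctx → Prop
  | nil : Split [] [] []
  | left {Γ Γ₁ Γ₂ A} : Split Γ Γ₁ Γ₂ → Split (some A :: Γ) (some A :: Γ₁) (none :: Γ₂)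
  | right {Γ Γ₁ Γ₂ A} : Split Γ Γ₁ Γ₂ → Split (some A :: Γ) (none :: Γ₁) (some A :: Γ₂)
  | skip {Γ Γ₁ Γ₂} : Split Γ Γ₁ Γ₂ → Split (none :: Γ) (none :: Γ₁) (none :: Γ₂)

/-- The context contains exactly one (available) assumption, of type `A`, at `n`. -/
def OnlyAt (Γ : Ctx) (n : ℕ) (A : Ty) : Prop :=
  Γ[n]? = some (some A) ∧ ∀ m, m ≠ n → ∀ B, Γ[m]? ≠ some (some B)

/-- Type assignment of `IMLL₂` for the linear λ-calculus: variables are used exactly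
once (ax and the context splitting of the application rule enforce linearity),
plus the second-order rules for `∀` (with the usual eigenvariable condition,
rendered by shifting the context in `allI`). -/
inductive HasTy : Ctx → Lam → Ty → Prop
  | var {Γ n A} : OnlyAt Γ n A → HasTy Γ (.var n) A
  | lam {Γ M A B} : HasTy (some A :: Γ) M B → HasTy Γ (.lam M) (A.arr B)
  | app {Γ Γ₁ Γ₂ M N A B} : Split Γ Γ₁ Γ₂ →
      HasTy Γ₁ M (A.arr B) → HasTy Γ₂ N A → HasTy Γ (.app M N) B
  | allI {Γ M A} : HasTy (Γ.map (Option.map Ty.shift)) M A → HasTy Γ M (.all A)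
  | allE {Γ M A} (B : Ty) : HasTy Γ M (.all A) → HasTy Γ M (A.instTop B)

end LEMPaper

/-!
Every linear term is simply typable over one base type `o`. Reading `o` as a type variable and
closing with a single `∀` gives a ground type, and a simple derivation is an `IMLL₂` derivation
because linearity makes the contexts of the two premises of an application disjoint.

Simple typability is proved by induction on size. A linear β-step preserves linearity and
strictly shrinks the term, and typing is preserved backwards along it (subject expansion), since
the contracted variable occurs exactly once and so the argument needs to be typed only once.
A β-normal linear term is typed directly: a head variable applied to arguments can be given
whatever type its context demands.
-/

namespace LEMPaper

namespace Lam

theorem liftRen_injective {ρ : ℕ → ℕ} (hρ : ρ.Injective) : (liftRen ρ).Injective := by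
  rintro (_ | a) (_ | b) h <;> simp_all [liftRen, hρ.eq_iff]

theorem size_rename (ρ : ℕ → ℕ) (M : Lam) : (M.rename ρ).size = M.size := by
  induction M generalizing ρ <;> simp_all [rename, size]

theorem countFree_rename_apply {ρ : ℕ → ℕ} (hρ : ρ.Injective) (M : Lam) (m : ℕ) :
    (M.rename ρ).countFree (ρ m) = M.countFree m := by
  induction M generalizing ρ m with
  | var n => simp [rename, countFree, hρ.eq_iff]
  | app M N ihM ihN => simp [rename, countFree, ihM hρ, ihN hρ]
  | lam M ih => exact ih (liftRen_injective hρ) (m + 1)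

theorem countFree_rename_of_notMem_range {ρ : ℕ → ℕ} {k : ℕ} (hk : k ∉ Set.range ρ) (M : Lam) :
    (M.rename ρ).countFree k = 0 := by
  induction M generalizing ρ k with
  | var n => simpa [rename, countFree] using fun h => hk ⟨n, h⟩
  | app M N ihM ihN => simp [rename, countFree, ihM hk, ihN hk]
  | lam M ih =>
    refine ih ?_
    rintro ⟨_ | m, h⟩
    · simp [liftRen] at h
    · exact hk ⟨m, by simpa [liftRen] using h⟩

theorem Linear.rename {ρ : ℕ → ℕ} (hρ : ρ.Injective) {M : Lam} (hM : M.Linear) :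
    (M.rename ρ).Linear := by
  induction M generalizing ρ with
  | var n => trivial
  | app M N ihM ihN =>
    refine ⟨ihM hρ hM.1, ihN hρ hM.2.1, fun k => ?_⟩
    by_cases hk : k ∈ Set.range ρ
    · obtain ⟨m, rfl⟩ := hk
      simpa only [countFree_rename_apply hρ] using hM.2.2 m
    · exact Or.inl (countFree_rename_of_notMem_range hk M)
  | lam M ih =>
    exact ⟨ih (liftRen_injective hρ) hM.1,
      (countFree_rename_apply (liftRen_injective hρ) M 0).trans hM.2⟩

@[simp] theorem countFree_shift_zero (M : Lam) : M.shift.countFree 0 = 0 :=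
  countFree_rename_of_notMem_range (by simp) M

@[simp] theorem countFree_shift_succ (M : Lam) (k : ℕ) :
    M.shift.countFree (k + 1) = M.countFree k :=
  countFree_rename_apply Nat.succ_injective M k

@[simp] theorem size_shift (M : Lam) : M.shift.size = M.size := size_rename _ M

theorem Linear.shift {M : Lam} (hM : M.Linear) : M.shift.Linear := hM.rename Nat.succ_injective

theorem subst_var (m n : ℕ) (N : Lam) :
    (var m).subst n N = if m < n then var m else if m = n then N else var (m - 1) := rfl

theorem subst_app (M₁ M₂ : Lam) (n : ℕ) (N : Lam) :
    (app M₁ M₂).subst n N = app (M₁.subst n N) (M₂.subst n N) := rfl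

theorem subst_lam (M : Lam) (n : ℕ) (N : Lam) :
    (lam M).subst n N = lam (M.subst (n + 1) N.shift) := by
  simp only [subst, substAll]
  congr 2
  funext m
  rcases m with _ | m
  · rfl
  · simp only [liftSub]
    split_ifs <;> first | omega | simp [shift, rename] <;> omega

theorem countFree_subst (M : Lam) (n : ℕ) (N : Lam) (k : ℕ) :
    (M.subst n N).countFree k =
      M.countFree (if k < n then k else k + 1) + M.countFree n * N.countFree k := by
  induction M generalizing n N k with
  | var m =>
    rw [subst_var]
    split_ifs <;> simp only [countFree] <;> split_ifs <;> omega
  | app M₁ M₂ ih₁ ih₂ =>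
    simp only [subst_app, countFree, ih₁, ih₂]
    ring
  | lam M ih =>
    simp only [subst_lam, countFree, ih, countFree_shift_succ]
    split_ifs <;> omega

theorem size_subst (M : Lam) (n : ℕ) (N : Lam) :
    (M.subst n N).size + M.countFree n = M.size + M.countFree n * N.size := by
  induction M generalizing n N with
  | var m =>
    rw [subst_var]
    split_ifs <;> simp only [size, countFree] <;> split_ifs <;> omega
  | app M₁ M₂ ih₁ ih₂ =>
    have := ih₁ n N
    have := ih₂ n N
    simp only [subst_app, size, countFree]
    nlinarith
  | lam M ih =>
    have := ih (n + 1) N.shift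
    simp only [subst_lam, size, countFree]
    simp only [size_shift] at this
    omega

theorem Linear.subst {M N : Lam} (hM : M.Linear) (hN : N.Linear) {n : ℕ}
    (hd : ∀ k, M.countFree (if k < n then k else k + 1) = 0 ∨ N.countFree k = 0) :
    (M.subst n N).Linear := by
  induction M generalizing n N with
  | var m =>
    rw [subst_var]
    split_ifs
    exacts [trivial, hN, trivial]
  | app M₁ M₂ ih₁ ih₂ =>
    obtain ⟨h₁, h₂, hd₁₂⟩ := hM
    rw [subst_app]
    simp only [countFree] at hd
    refine ⟨ih₁ h₁ hN fun k => ?_, ih₂ h₂ hN fun k => ?_, fun k => ?_⟩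
    · have := hd k; omega
    · have := hd k; omega
    · simp only [countFree_subst]
      have hdk := hd k
      generalize (if k < n then k else k + 1) = j at hdk ⊢
      rcases hdk with hj | hk
      · rcases hd₁₂ n with h | h <;> simp [h] <;> omega
      · rcases hd₁₂ j with h | h <;> simp [h, hk]
  | lam M ih =>
    obtain ⟨hM, h₀⟩ := hM
    rw [subst_lam]
    refine ⟨ih hM hN.shift fun k => ?_, ?_⟩
    · rcases k with _ | k
      · simp
      · have hj : (if k + 1 < n + 1 then k + 1 else k + 1 + 1) =
            (if k < n then k else k + 1) + 1 := by
          split_ifs <;> omega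
        rw [hj, countFree_shift_succ]
        exact hd k
    · simp [countFree_subst, h₀]

theorem Beta.countFree_eq {M M' : Lam} (h : Beta M M') (hM : M.Linear) (k : ℕ) :
    M'.countFree k = M.countFree k := by
  induction h generalizing k with
  | beta P N => simp [countFree_subst, countFree, hM.1.2]
  | appL N _ ih => simp [countFree, ih hM.1]
  | appR M _ ih => simp [countFree, ih hM.2.1]
  | lam _ ih => simp [countFree, ih hM.1]

theorem Beta.linear {M M' : Lam} (h : Beta M M') (hM : M.Linear) : M'.Linear := by
  induction h with
  | beta P N =>
    obtain ⟨⟨hP, _⟩, hN, hd⟩ := hM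
    exact hP.subst hN fun k => by simpa [countFree] using hd k
  | appL N h ih => exact ⟨ih hM.1, hM.2.1, fun k => h.countFree_eq hM.1 k ▸ hM.2.2 k⟩
  | appR M h ih => exact ⟨hM.1, ih hM.2.1, fun k => h.countFree_eq hM.2.1 k ▸ hM.2.2 k⟩
  | lam h ih => exact ⟨ih hM.1, h.countFree_eq hM.1 0 ▸ hM.2⟩

theorem Beta.size_lt {M M' : Lam} (h : Beta M M') (hM : M.Linear) : M'.size < M.size := by
  induction h with
  | beta P N =>
    have := size_subst P 0 N
    simp only [hM.1.2] at this
    simp only [size]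
    omega
  | appL N _ ih => simpa [size] using ih hM.1
  | appR M _ ih => simpa [size] using ih hM.2.1
  | lam _ ih => simpa [size] using ih hM.1

end Lam

inductive STy : Type
  | o : STy
  | arr : STy → STy → STy

namespace STy

def toTy : STy → Ty
  | o => .var 0
  | arr A B => .arr A.toTy B.toTy

theorem isPiSigma_toTy (A : STy) (b : Bool) : A.toTy.isPiSigma b := by
  induction A generalizing b with
  | o => trivial
  | arr A B ihA ihB => exact ⟨ihA _, ihB _⟩

theorem closedAt_one_toTy (A : STy) : A.toTy.ClosedAt 1 := by
  induction A with
  | o => exact Nat.one_pos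
  | arr A B ihA ihB => exact ⟨ihA, ihB⟩

theorem ground_all_toTy (A : STy) : (Ty.all A.toTy).Ground :=
  ⟨⟨rfl, A.isPiSigma_toTy true⟩, A.closedAt_one_toTy⟩

end STy

def scons {α : Type*} (a : α) (τ : ℕ → α) : ℕ → α
  | 0 => a
  | n + 1 => τ n

/-- Environments are total: linearity is not enforced by the judgement but carried
separately by `Lam.Linear`. -/
inductive STyped : (ℕ → STy) → Lam → STy → Prop
  | var {τ n} : STyped τ (.var n) (τ n)
  | lam {τ M A B} : STyped (scons A τ) M B → STyped τ (.lam M) (.arr A B)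
  | app {τ M N A B} : STyped τ M (.arr A B) → STyped τ N A → STyped τ (.app M N) B

namespace STyped

variable {τ τ' : ℕ → STy} {M M' N : Lam} {A B : STy}

theorem var_iff {n : ℕ} : STyped τ (.var n) A ↔ A = τ n :=
  ⟨fun h => by cases h; rfl, fun h => h ▸ var⟩

theorem congr (h : STyped τ M A) (hτ : ∀ k, M.countFree k ≠ 0 → τ k = τ' k) :
    STyped τ' M A := by
  induction h generalizing τ' with
  | @var τ n => exact hτ n (by simp [Lam.countFree]) ▸ var
  | lam _ ih =>
    refine lam (ih fun k hk => ?_)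
    rcases k with _ | k
    · rfl
    · exact hτ k hk
  | app _ _ ihM ihN =>
    exact app (ihM fun k hk => hτ k (by simp [Lam.countFree, hk]))
      (ihN fun k hk => hτ k (by simp [Lam.countFree, hk]))

theorem of_rename {ρ : ℕ → ℕ} (h : STyped τ (M.rename ρ) A) : STyped (τ ∘ ρ) M A := by
  induction M generalizing τ ρ A with
  | var n => cases h; exact var
  | app M N ihM ihN => cases h with | app hM hN => exact app (ihM hM) (ihN hN)
  | lam M ih =>
    cases h with
    | lam h =>
      refine lam ((ih h).congr fun k _ => ?_)
      rcases k with _ | k <;> rfl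

theorem of_shift (h : STyped (scons A τ) M.shift B) : STyped τ M B :=
  of_rename (ρ := Nat.succ) h

theorem app_of_disjoint {τ₁ τ₂ : ℕ → STy} (hd : ∀ k, M.countFree k = 0 ∨ N.countFree k = 0)
    (hM : STyped τ₁ M (.arr A B)) (hN : STyped τ₂ N A) :
    STyped (fun k => if M.countFree k = 0 then τ₂ k else τ₁ k) (.app M N) B :=
  app (hM.congr fun k hk => by simp [hk]) (hN.congr fun k hk => by simp [(hd k).resolve_right hk])

theorem of_substAll {s : ℕ → Lam} (hM : M.Linear) (h : STyped τ (M.substAll s) B) :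
    ∃ σ, STyped σ M B ∧ ∀ k, M.countFree k ≠ 0 → STyped τ (s k) (σ k) := by
  induction M generalizing τ s B with
  | var m =>
    refine ⟨fun _ => B, var, fun k hk => ?_⟩
    obtain rfl : m = k := by simpa [Lam.countFree] using hk
    exact h
  | app M N ihM ihN =>
    cases h with
    | app hMs hNs =>
      obtain ⟨σ₁, hσ₁, hs₁⟩ := ihM hM.1 hMs
      obtain ⟨σ₂, hσ₂, hs₂⟩ := ihN hM.2.1 hNs
      refine ⟨_, app_of_disjoint hM.2.2 hσ₁ hσ₂, fun k hk => ?_⟩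
      by_cases hk₁ : M.countFree k = 0
      · simpa [hk₁] using hs₂ k (by simpa [Lam.countFree, hk₁] using hk)
      · simpa [hk₁] using hs₁ k hk₁
  | lam M ih =>
    cases h with
    | @lam _ _ C _ h =>
      obtain ⟨σ, hσ, hs⟩ := ih hM.1 h
      have hσ₀ : σ 0 = C := var_iff.mp (hs 0 (by simp [hM.2]))
      refine ⟨fun k => σ (k + 1), lam (hσ.congr fun k _ => ?_),
        fun k hk => of_shift (hs (k + 1) hk)⟩
      rcases k with _ | k
      · exact hσ₀
      · rfl

theorem of_beta (hβ : Lam.Beta M M') (hM : M.Linear) (h : STyped τ M' A) :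
    STyped τ M A := by
  induction hβ generalizing τ A with
  | beta P N =>
    obtain ⟨σ, hP, hs⟩ := of_substAll hM.1.1 h
    refine app (lam (hP.congr fun k hk => ?_)) (hs 0 (by simp [hM.1.2]))
    rcases k with _ | k
    · rfl
    · exact (var_iff (τ := τ) (n := k)).mp (hs (k + 1) hk)
  | appL N _ ih => cases h with | app hM' hN => exact app (ih hM.1 hM') hN
  | appR M _ ih => cases h with | app hM' hN => exact app hM' (ih hM.2.1 hN)
  | lam _ ih => cases h with | lam h => exact lam (ih hM.1 h)

theorem exists_of_normal (hM : M.Linear) (hnf : ∀ W, ¬ Lam.Beta M W) :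
    (∃ τ A, STyped τ M A) ∧ ((∀ P, M ≠ .lam P) → ∀ B, ∃ τ, STyped τ M B) := by
  induction M with
  | var n => exact ⟨⟨fun _ => .o, .o, var⟩, fun _ B => ⟨fun _ => B, var⟩⟩
  | lam P ih =>
    obtain ⟨τ, B, hP⟩ := (ih hM.1 fun W hW => hnf _ (.lam hW)).1
    refine ⟨⟨fun k => τ (k + 1), .arr (τ 0) B, lam (hP.congr fun k _ => ?_)⟩,
      fun h => absurd rfl (h P)⟩
    rcases k with _ | k <;> rfl
  | app M N ihM ihN =>
    have hM_ne : ∀ P, M ≠ .lam P := by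
      rintro P rfl
      exact hnf _ (.beta P N)
    obtain ⟨τ₂, A, hN⟩ := (ihN hM.2.1 fun W hW => hnf _ (.appR M hW)).1
    have typed : ∀ B, ∃ τ, STyped τ (.app M N) B := fun B => by
      obtain ⟨τ₁, hM'⟩ := (ihM hM.1 fun W hW => hnf _ (.appL N hW)).2 hM_ne (.arr A B)
      exact ⟨_, app_of_disjoint hM.2.2 hM' hN⟩
    obtain ⟨τ, h⟩ := typed .o
    exact ⟨⟨τ, .o, h⟩, fun _ => typed⟩

theorem exists_of_linear (M : Lam) (hM : M.Linear) : ∃ τ A, STyped τ M A := by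
  by_cases hnf : ∃ M', Lam.Beta M M'
  · obtain ⟨M', hβ⟩ := hnf
    have hsize : M'.size < M.size := hβ.size_lt hM
    obtain ⟨τ, A, h⟩ := exists_of_linear M' (hβ.linear hM)
    exact ⟨τ, A, h.of_beta hβ hM⟩
  · push Not at hnf
    exact (exists_of_normal hM hnf).1
termination_by M.size

end STyped

theorem split_map_range {γ γ₁ γ₂ : ℕ → Option Ty}
    (h : ∀ k, (γ₁ k = γ k ∧ γ₂ k = none) ∨ (γ₁ k = none ∧ γ₂ k = γ k)) (d : ℕ) :
    Split ((List.range d).map γ) ((List.range d).map γ₁) ((List.range d).map γ₂) := by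
  induction d generalizing γ γ₁ γ₂ with
  | zero => exact .nil
  | succ d ih =>
    simp only [List.range_succ_eq_map, List.map_cons, List.map_map]
    have tail :=
      ih (γ := γ ∘ Nat.succ) (γ₁ := γ₁ ∘ Nat.succ) (γ₂ := γ₂ ∘ Nat.succ) fun k => h (k + 1)
    rcases h 0 with ⟨h₁, h₂⟩ | ⟨h₁, h₂⟩ <;> rw [h₁, h₂]
    · rcases γ 0 with _ | A
      exacts [.skip tail, .left tail]
    · rcases γ 0 with _ | A
      exacts [.skip tail, .right tail]

def freeCtx (τ : ℕ → STy) (M : Lam) (d : ℕ) : Ctx :=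
  (List.range d).map fun k => if M.countFree k = 0 then none else some (τ k).toTy

theorem STyped.hasTy_freeCtx {τ : ℕ → STy} {M : Lam} {A : STy} (h : STyped τ M A)
    (hM : M.Linear) {d : ℕ} (hd : ∀ k, d ≤ k → M.countFree k = 0) :
    HasTy (freeCtx τ M d) M A.toTy := by
  induction h generalizing d with
  | @var τ n =>
    have hn : n < d := by
      by_contra hn
      simpa [Lam.countFree] using hd n (not_lt.mp hn)
    refine .var ⟨by simp [freeCtx, hn, Lam.countFree], fun m hm B => ?_⟩
    simp only [freeCtx, List.getElem?_map, Lam.countFree]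
    rcases lt_or_ge m d with hmd | hmd
    · simp [List.getElem?_range hmd, Ne.symm hm]
    · simp [hmd]
  | @lam τ P A B _ ih =>
    have hd' : ∀ k, d + 1 ≤ k → P.countFree k = 0 := by
      rintro (_ | k) hk
      exacts [absurd hk (by omega), hd k (by omega)]
    have hctx : freeCtx (scons A τ) P (d + 1) = some A.toTy :: freeCtx τ (.lam P) d := by
      simp only [freeCtx, List.range_succ_eq_map, List.map_cons, List.map_map, hM.2]
      rfl
    exact .lam (hctx ▸ ih hM.1 hd')
  | app _ _ ihM ihN =>
    refine .app (split_map_range (fun k => ?_) d) (ihM hM.1 fun k hk => ?_)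
      (ihN hM.2.1 fun k hk => ?_)
    · rcases hM.2.2 k with h | h <;> simp [Lam.countFree, h]
    · have := hd k hk; simp only [Lam.countFree] at this; omega
    · have := hd k hk; simp only [Lam.countFree] at this; omega

/-- Fact 2.1: every closed linear λ-term has a ground type in `IMLL₂`,
i.e. there is a closed `Π₁`-type `A` with `⊢ M : A` derivable. -/
theorem closed_linear_term_has_ground_type
    (M : Lam) (hlin : M.Linear) (hcl : M.Closed) :
    ∃ A : Ty, Ty.Ground A ∧ HasTy [] M A := by
  obtain ⟨τ, A, h⟩ := STyped.exists_of_linear M hlin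
  exact ⟨.all A.toTy, A.ground_all_toTy, .allI (h.hasTy_freeCtx hlin (d := 0) fun k _ => hcl k)⟩

end LEMPaper
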